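/- arXiv:1811.02431 — 3 statements merged into one kernel-verified Lean document; each statement's English description precedes it below -/
import Mathlib

section
/- If (Ψ_t, Θ_t) is a formal isomorphism between two formal deformations (ξ_t, η_t, φ_t) and (ξ̃_t, η̃_t, φ̃_t) of a module homomorphism φ: M → N, then ξ_1 − ξ̃_1 = δ^0ψ_1, η_1 − η̃_1 = δ^0θ_1, and φ_1 − φ̃_1 = φψ_1 − θ_1φ; consequently (ξ_1, η_1, φ_1) − (ξ̃_1, η̃_1, φ̃_1) = d^1(ψ_1, θ_1, 0), so the infinitesimals of equivalent deformations have the same cohomology class in H^1(φ). -/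
open Finset

variable {k A M N : Type*} [CommRing k] [Ring A] [Algebra k A]
  [AddCommGroup M] [Module k M] [AddCommGroup N] [Module k N]

/-- `(ξ_t = Σ ξᵢ tⁱ, η_t = Σ ηᵢ tⁱ, φ_t = Σ φᵢ tⁱ)` is a formal one-parameter deformation
of the `A`-module homomorphism `φ : M → N`, where the module structures on `M` and `N` are
given by the algebra homomorphisms `ξ₀ : A → End_k(M)` and `η₀ : A → End_k(N)`.
The conditions `ξ_t(rs) = ξ_t(r)ξ_t(s)`, `η_t(rs) = η_t(r)η_t(s)` and
`φ_t(ξ_t(r)m) = η_t(r)φ_t(m)` are written out coefficientwise. -/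
def IsFormalDeformation (ξ0 : A →ₐ[k] Module.End k M) (η0 : A →ₐ[k] Module.End k N)
    (φ : M →ₗ[k] N) (ξ : ℕ → (A →ₗ[k] Module.End k M)) (η : ℕ → (A →ₗ[k] Module.End k N))
    (Φ : ℕ → (M →ₗ[k] N)) : Prop :=
  ξ 0 = ξ0.toLinearMap ∧ η 0 = η0.toLinearMap ∧ Φ 0 = φ ∧
  (∀ (l : ℕ) (r s : A), ξ l (r * s) = ∑ ij ∈ antidiagonal l, ξ ij.1 r * ξ ij.2 s) ∧
  (∀ (l : ℕ) (r s : A), η l (r * s) = ∑ ij ∈ antidiagonal l, η ij.1 r * η ij.2 s) ∧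
  (∀ (l : ℕ) (r : A), ∑ ij ∈ antidiagonal l, Φ ij.1 ∘ₗ (ξ ij.2 r : M →ₗ[k] M) =
    ∑ ij ∈ antidiagonal l, (η ij.1 r : N →ₗ[k] N) ∘ₗ Φ ij.2)

/-- A deformation of order `n` of the module homomorphism `φ : M → N`: the deformation
equations hold modulo `t^{n+1}`, i.e. for all `l ≤ n`. -/
def IsDeformationOfOrder (ξ0 : A →ₐ[k] Module.End k M) (η0 : A →ₐ[k] Module.End k N)
    (φ : M →ₗ[k] N) (ξ : ℕ → (A →ₗ[k] Module.End k M)) (η : ℕ → (A →ₗ[k] Module.End k N))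
    (Φ : ℕ → (M →ₗ[k] N)) (n : ℕ) : Prop :=
  ξ 0 = ξ0.toLinearMap ∧ η 0 = η0.toLinearMap ∧ Φ 0 = φ ∧
  (∀ l ≤ n, ∀ r s : A, ξ l (r * s) = ∑ ij ∈ antidiagonal l, ξ ij.1 r * ξ ij.2 s) ∧
  (∀ l ≤ n, ∀ r s : A, η l (r * s) = ∑ ij ∈ antidiagonal l, η ij.1 r * η ij.2 s) ∧
  (∀ l ≤ n, ∀ r : A, ∑ ij ∈ antidiagonal l, Φ ij.1 ∘ₗ (ξ ij.2 r : M →ₗ[k] M) =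
    ∑ ij ∈ antidiagonal l, (η ij.1 r : N →ₗ[k] N) ∘ₗ Φ ij.2)

/-- `(u, v, w)` is a 1-cocycle in the deformation complex `C^*(φ)`:
`δu = 0` in `C²(A;End M)`, `δv = 0` in `C²(A;End N)` and `φu - vφ - δw = 0`
in `C¹(A;Hom_k(M,N))`. -/
def IsOneCocycle (ξ0 : A →ₐ[k] Module.End k M) (η0 : A →ₐ[k] Module.End k N)
    (φ : M →ₗ[k] N) (u : A →ₗ[k] Module.End k M) (v : A →ₗ[k] Module.End k N)
    (w : M →ₗ[k] N) : Prop :=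
  (∀ a b : A, ξ0 a * u b - u (a * b) + u a * ξ0 b = 0) ∧
  (∀ a b : A, η0 a * v b - v (a * b) + v a * η0 b = 0) ∧
  (∀ a : A, φ ∘ₗ (u a : M →ₗ[k] M) - (v a : N →ₗ[k] N) ∘ₗ φ -
    ((η0 a : N →ₗ[k] N) ∘ₗ w - w ∘ₗ (ξ0 a : M →ₗ[k] M)) = 0)

/-- `(Ψ_t = Σ ψᵢ tⁱ, Θ_t = Σ θᵢ tⁱ)` is a formal isomorphism from the deformation
`(ξ_t, η_t, φ_t)` to the deformation `(ξ'_t, η'_t, φ'_t)` of the module homomorphism `φ`: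
`ψ₀ = id`, `θ₀ = id`, `ξ'_t(r) Ψ_t = Ψ_t ξ_t(r)`, `η'_t(r) Θ_t = Θ_t η_t(r)` and
`φ'_t ∘ Ψ_t = Θ_t ∘ φ_t`, written out coefficientwise (Cauchy products). -/
def IsFormalIso (ξ : ℕ → (A →ₗ[k] Module.End k M)) (η : ℕ → (A →ₗ[k] Module.End k N))
    (Φ : ℕ → (M →ₗ[k] N)) (ξ' : ℕ → (A →ₗ[k] Module.End k M))
    (η' : ℕ → (A →ₗ[k] Module.End k N)) (Φ' : ℕ → (M →ₗ[k] N))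
    (ψ : ℕ → Module.End k M) (θ : ℕ → Module.End k N) : Prop :=
  ψ 0 = 1 ∧ θ 0 = 1 ∧
  (∀ (l : ℕ) (r : A), ∑ ij ∈ antidiagonal l, ξ' ij.1 r * ψ ij.2 =
    ∑ ij ∈ antidiagonal l, ψ ij.1 * ξ ij.2 r) ∧
  (∀ (l : ℕ) (r : A), ∑ ij ∈ antidiagonal l, η' ij.1 r * θ ij.2 =
    ∑ ij ∈ antidiagonal l, θ ij.1 * η ij.2 r) ∧
  (∀ l : ℕ, ∑ ij ∈ antidiagonal l, Φ' ij.1 ∘ₗ (ψ ij.2 : M →ₗ[k] M) =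
    ∑ ij ∈ antidiagonal l, (θ ij.1 : N →ₗ[k] N) ∘ₗ Φ ij.2)

/-- The trivial (constant) deformation coefficients attached to a structure map. -/
def trivialCoeffs {F : Type*} [Zero F] (f : F) : ℕ → F := fun i => if i = 0 then f else 0

/- Comparing coefficients of `t` in `f'_t ∘ Ψ_t = Θ_t ∘ f_t`, where `Ψ_t`, `Θ_t` start with the
identity and `f_t`, `f'_t` both start with `g`, gives `g ψ₁ + f'₁ = f₁ + θ₁ g`. The three claims
are this one computation, applied to `ξ_t(a)`, `η_t(a)` and `φ_t`. -/

section

variable {R M₁ M₂ : Type*} [Semiring R] [AddCommMonoid M₁] [Module R M₁]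
  [AddCommGroup M₂] [Module R M₂]

theorem Finset.Nat.sum_antidiagonal_one {β : Type*} [AddCommMonoid β] (f : ℕ × ℕ → β) :
    ∑ ij ∈ antidiagonal 1, f ij = f (0, 1) + f (1, 0) := by
  rw [Finset.Nat.sum_antidiagonal_succ, Finset.Nat.antidiagonal_zero, sum_singleton]

theorem LinearMap.coeff_one_sub_eq_of_comp_eq {f f' : ℕ → M₁ →ₗ[R] M₂} {g : M₁ →ₗ[R] M₂}
    {ψ : ℕ → Module.End R M₁} {θ : ℕ → Module.End R M₂} (hf : f 0 = g) (hf' : f' 0 = g)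
    (hψ : ψ 0 = 1) (hθ : θ 0 = 1)
    (h : ∑ ij ∈ antidiagonal 1, f' ij.1 ∘ₗ ψ ij.2 = ∑ ij ∈ antidiagonal 1, θ ij.1 ∘ₗ f ij.2) :
    f 1 - f' 1 = g ∘ₗ ψ 1 - θ 1 ∘ₗ g := by
  simp only [Finset.Nat.sum_antidiagonal_one, hf, hf', hψ, hθ, Module.End.one_eq_id,
    LinearMap.comp_id, LinearMap.id_comp] at h
  rw [sub_eq_sub_iff_add_eq_add, ← h, add_comm]

end

/-- If `(Ψ_t, Θ_t)` is a formal isomorphism between two formal deformations of `φ`, then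
`ξ₁ - ξ'₁ = δ⁰ψ₁`, `η₁ - η'₁ = δ⁰θ₁` and `φ₁ - φ'₁ = φψ₁ - θ₁φ`; that is, the difference
of the infinitesimals is the coboundary `d¹(ψ₁, θ₁, 0)`, so equivalent deformations have
cohomologous infinitesimals. -/
theorem infinitesimal_cohomologous_of_equivalent (ξ0 : A →ₐ[k] Module.End k M)
    (η0 : A →ₐ[k] Module.End k N) (φ : M →ₗ[k] N)
    (ξ ξ' : ℕ → (A →ₗ[k] Module.End k M)) (η η' : ℕ → (A →ₗ[k] Module.End k N))
    (Φ Φ' : ℕ → (M →ₗ[k] N)) (ψ : ℕ → Module.End k M) (θ : ℕ → Module.End k N)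
    (hdef : IsFormalDeformation ξ0 η0 φ ξ η Φ)
    (hdef' : IsFormalDeformation ξ0 η0 φ ξ' η' Φ')
    (hiso : IsFormalIso ξ η Φ ξ' η' Φ' ψ θ) :
    (∀ a : A, ξ 1 a - ξ' 1 a = ξ0 a * ψ 1 - ψ 1 * ξ0 a) ∧
    (∀ a : A, η 1 a - η' 1 a = η0 a * θ 1 - θ 1 * η0 a) ∧
    (Φ 1 - Φ' 1 = φ ∘ₗ (ψ 1 : M →ₗ[k] M) - (θ 1 : N →ₗ[k] N) ∘ₗ φ) := by
  obtain ⟨hξ0, hη0, hΦ0, -⟩ := hdef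
  obtain ⟨hξ0', hη0', hΦ0', -⟩ := hdef'
  obtain ⟨hψ0, hθ0, hξiso, hηiso, hΦiso⟩ := hiso
  refine ⟨fun a => ?_, fun a => ?_, ?_⟩
  · exact LinearMap.coeff_one_sub_eq_of_comp_eq (f := (ξ · a)) (f' := (ξ' · a))
      (LinearMap.congr_fun hξ0 a) (LinearMap.congr_fun hξ0' a) hψ0 hψ0 (hξiso 1 a)
  · exact LinearMap.coeff_one_sub_eq_of_comp_eq (f := (η · a)) (f' := (η' · a))
      (LinearMap.congr_fun hη0 a) (LinearMap.congr_fun hη0' a) hθ0 hθ0 (hηiso 1 a)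
  · exact LinearMap.coeff_one_sub_eq_of_comp_eq hΦ0 hΦ0' hψ0 hθ0 (hΦiso 1)
end

section
/- Every non-trivial formal deformation of a module homomorphism φ: M → N is equivalent to a formal deformation whose n-infinitesimal is not a coboundary in C^1(φ), for some n ≥ 1. -/
open Finset

variable {k A M N : Type*} [CommRing k] [Ring A] [Algebra k A]
  [AddCommGroup M] [Module k M] [AddCommGroup N] [Module k N]

/-!
Suppose the theorem fails. If a deformation equivalent to `(ξ_t, η_t, φ_t)` vanishes in degrees
`1, …, n - 1`, its `n`-infinitesimal is then `d(p, q)` for some `(p, q)`, and conjugating by the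
gauge `(1 + p tⁿ, 1 + q tⁿ)` makes it vanish in degree `n` as well, while changing the accumulated
gauge only from degree `n` on. The accumulated gauges therefore converge `t`-adically, and their
limit is an isomorphism onto the trivial deformation.

To run this argument with ring-theoretic tools, `(ξ_t(r), η_t(r))` and the gauges `(Ψ_t, Θ_t)`
are power series over the product ring `End M × End N`, and `φ_t` is a power series over
`End (M × N)`, with `Hom(M, N)` embedded as the lower left corner. The deformation and isomorphism
equations then say that `φ_t` commutes with the block diagonal `(ξ_t(r), η_t(r))`, and that the
gauge semiconjugates the old structure maps to the new ones.
-/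

open PowerSeries

theorem exists_seq_of_forall_exists_succ {α : Type*} {P : ℕ → α → Prop}
    {R : ℕ → α → α → Prop} {a : α} (h0 : P 0 a) (h : ∀ n a, P n a → ∃ b, P (n + 1) b ∧ R n a b) :
    ∃ f : ℕ → α, (∀ n, P n (f n)) ∧ ∀ n, R n (f n) (f (n + 1)) := by
  choose g hg using h
  let s : (n : ℕ) → {a // P n a} := fun n =>
    Nat.rec ⟨a, h0⟩ (fun n b => ⟨g n b.1 b.2, (hg n b.1 b.2).1⟩) n
  exact ⟨fun n => (s n).1, fun n => (s n).2, fun n => (hg n _ (s n).2).2⟩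

theorem eq_diag_of_forall_succ_eq {β : Type*} {f : ℕ → ℕ → β}
    (h : ∀ n, ∀ i < n + 1, f (n + 1) i = f n i) {i n : ℕ} (hi : i ≤ n) : f n i = f i i := by
  induction n, hi using Nat.le_induction with
  | base => rfl
  | succ n hin ih => rw [h n i (Nat.lt_succ_of_le hin), ih]

namespace PowerSeries

theorem coeff_mul_fst {R S : Type*} [Semiring R] [Semiring S] (f g : PowerSeries (R × S))
    (l : ℕ) : (coeff l (f * g)).1 = ∑ ij ∈ antidiagonal l, (coeff ij.1 f).1 * (coeff ij.2 g).1 := by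
  simp [coeff_mul, Prod.fst_sum]

theorem coeff_mul_snd {R S : Type*} [Semiring R] [Semiring S] (f g : PowerSeries (R × S))
    (l : ℕ) : (coeff l (f * g)).2 = ∑ ij ∈ antidiagonal l, (coeff ij.1 f).2 * (coeff ij.2 g).2 := by
  simp [coeff_mul, Prod.snd_sum]

variable {S : Type*}

theorem coeff_mul_congr [Semiring S] {f f' g g' : S⟦X⟧} {l : ℕ}
    (hf : ∀ i ≤ l, coeff i f = coeff i f') (hg : ∀ i ≤ l, coeff i g = coeff i g') :
    coeff l (f * g) = coeff l (f' * g') := by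
  simp only [coeff_mul]
  refine Finset.sum_congr rfl fun ij hij => ?_
  rw [hf _ (HasAntidiagonal.antidiagonal.fst_le hij),
    hg _ (HasAntidiagonal.antidiagonal.snd_le hij)]

theorem coeff_semiconjBy_congr [Semiring S] {a x y a' x' y' : S⟦X⟧} {l : ℕ}
    (h : SemiconjBy a' x' y') (ha : ∀ i ≤ l, coeff i a = coeff i a')
    (hx : ∀ i ≤ l, coeff i x = coeff i x') (hy : ∀ i ≤ l, coeff i y = coeff i y') :
    coeff l (a * x) = coeff l (y * a) := by
  rw [coeff_mul_congr ha hx, h.eq, coeff_mul_congr (fun i hi => (hy i hi).symm)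
    fun i hi => (ha i hi).symm]

theorem coeff_one_add_C_mul_X_pow_mul [Semiring S] (x : S) (n l : ℕ) (g : S⟦X⟧) :
    coeff l ((1 + C x * X ^ n) * g) = coeff l g + if n ≤ l then x * coeff (l - n) g else 0 := by
  rw [add_mul, one_mul, map_add, mul_assoc, coeff_C_mul, coeff_X_pow_mul', mul_ite, mul_zero]

theorem coeff_mul_one_add_C_mul_X_pow [Semiring S] (x : S) (n l : ℕ) (f : S⟦X⟧) :
    coeff l (f * (1 + C x * X ^ n)) = coeff l f + if n ≤ l then coeff (l - n) f * x else 0 := by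
  rw [mul_add, mul_one, map_add, ← mul_assoc, ← X_pow_mul, coeff_X_pow_mul', coeff_mul_C]

theorem coeff_of_semiconjBy_one_add_C_mul_X_pow [Ring S] {f g : S⟦X⟧} {x : S} {n : ℕ}
    (hn : 1 ≤ n) (h : SemiconjBy (1 + C x * X ^ n) g f) :
    (∀ l < n, coeff l f = coeff l g) ∧ coeff n f = coeff n g + x * coeff 0 g - coeff 0 g * x := by
  have hcoeff (l : ℕ) := congr(coeff l $(h.eq))
  simp only [coeff_one_add_C_mul_X_pow_mul, coeff_mul_one_add_C_mul_X_pow] at hcoeff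
  have hlow (l : ℕ) (hl : l < n) : coeff l f = coeff l g := by
    simpa [not_le.2 hl] using (hcoeff l).symm
  refine ⟨hlow, eq_sub_of_add_eq ?_⟩
  simpa [hlow 0 hn] using (hcoeff n).symm

end PowerSeries

def corner : (M →ₗ[k] N) →ₗ[k] Module.End k (M × N) where
  toFun w := LinearMap.inr k M N ∘ₗ w ∘ₗ LinearMap.fst k M N
  map_add' _ _ := by ext <;> simp
  map_smul' _ _ := by ext <;> simp

theorem corner_injective : Function.Injective (corner : (M →ₗ[k] N) → Module.End k (M × N)) :=
  fun w w' h => LinearMap.ext fun m => by simpa [corner] using congr(($h (m, 0)).2)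

theorem prodMap_mul_corner (a : Module.End k M) (b : Module.End k N) (w : M →ₗ[k] N) :
    a.prodMap b * corner w = corner (b ∘ₗ w) := by
  ext <;> simp [corner]

theorem corner_mul_prodMap (w : M →ₗ[k] N) (a : Module.End k M) (b : Module.End k N) :
    corner w * a.prodMap b = corner (w ∘ₗ a) := by
  ext <;> simp [corner]

variable (k M N) in
abbrev blockDiag :
    PowerSeries (Module.End k M × Module.End k N) →+* PowerSeries (Module.End k (M × N)) :=
  map (LinearMap.prodMapRingHom k M N)

noncomputable def cornerSeries (Φ : ℕ → M →ₗ[k] N) : PowerSeries (Module.End k (M × N)) :=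
  mk fun l => corner (Φ l)

noncomputable def actionSeries (ξ : ℕ → A →ₗ[k] Module.End k M)
    (η : ℕ → A →ₗ[k] Module.End k N) :
    A →ₗ[k] PowerSeries (Module.End k M × Module.End k N) where
  toFun r := mk fun l => (ξ l r, η l r)
  map_add' r s := by ext <;> simp
  map_smul' c r := by ext <;> simp

@[simp]
theorem coeff_cornerSeries (Φ : ℕ → M →ₗ[k] N) (l : ℕ) :
    coeff l (cornerSeries Φ) = corner (Φ l) :=
  coeff_mk _ _

@[simp]
theorem coeff_actionSeries (ξ : ℕ → A →ₗ[k] Module.End k M)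
    (η : ℕ → A →ₗ[k] Module.End k N) (r : A) (l : ℕ) :
    coeff l (actionSeries ξ η r) = (ξ l r, η l r) := by
  simp [actionSeries]

@[simp]
theorem constantCoeff_actionSeries (ξ : ℕ → A →ₗ[k] Module.End k M)
    (η : ℕ → A →ₗ[k] Module.End k N) (r : A) :
    constantCoeff (actionSeries ξ η r) = (ξ 0 r, η 0 r) := by
  rw [← coeff_zero_eq_constantCoeff_apply, coeff_actionSeries]

@[simp]
theorem constantCoeff_cornerSeries (Φ : ℕ → M →ₗ[k] N) :
    constantCoeff (cornerSeries Φ) = corner (Φ 0) := by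
  rw [← coeff_zero_eq_constantCoeff_apply, coeff_cornerSeries]

theorem exists_actionSeries_eq (L : A →ₗ[k] PowerSeries (Module.End k M × Module.End k N)) :
    ∃ ξ η, actionSeries ξ η = L :=
  ⟨fun l => LinearMap.fst k _ _ ∘ₗ (coeff l).restrictScalars k ∘ₗ L,
    fun l => LinearMap.snd k _ _ ∘ₗ (coeff l).restrictScalars k ∘ₗ L, by ext <;> simp⟩

theorem cornerSeries_injective :
    Function.Injective (cornerSeries : (ℕ → M →ₗ[k] N) → PowerSeries (Module.End k (M × N))) :=
  fun Φ Φ' h => funext fun l => corner_injective (by simpa using congr(coeff l $h))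

theorem cornerSeries_mul_blockDiag (Φ : ℕ → M →ₗ[k] N)
    (V : PowerSeries (Module.End k M × Module.End k N)) :
    cornerSeries Φ * blockDiag k M N V =
      cornerSeries fun l => ∑ ij ∈ antidiagonal l, Φ ij.1 ∘ₗ (coeff ij.2 V).1 := by
  ext l : 1
  simp [coeff_mul, corner_mul_prodMap]

theorem blockDiag_mul_cornerSeries (V : PowerSeries (Module.End k M × Module.End k N))
    (Φ : ℕ → M →ₗ[k] N) :
    blockDiag k M N V * cornerSeries Φ =
      cornerSeries fun l => ∑ ij ∈ antidiagonal l, (coeff ij.1 V).2 ∘ₗ Φ ij.2 := by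
  ext l : 1
  simp [coeff_mul, prodMap_mul_corner]

theorem isFormalDeformation_iff {ξ0 : A →ₐ[k] Module.End k M} {η0 : A →ₐ[k] Module.End k N}
    {φ : M →ₗ[k] N} {ξ : ℕ → A →ₗ[k] Module.End k M} {η : ℕ → A →ₗ[k] Module.End k N}
    {Φ : ℕ → M →ₗ[k] N} :
    IsFormalDeformation ξ0 η0 φ ξ η Φ ↔
      ξ 0 = ξ0.toLinearMap ∧ η 0 = η0.toLinearMap ∧ Φ 0 = φ ∧
      (∀ r s, actionSeries ξ η (r * s) = actionSeries ξ η r * actionSeries ξ η s) ∧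
      ∀ r, Commute (cornerSeries Φ) (blockDiag k M N (actionSeries ξ η r)) := by
  simp only [IsFormalDeformation, Commute, SemiconjBy, cornerSeries_mul_blockDiag,
    blockDiag_mul_cornerSeries, cornerSeries_injective.eq_iff, funext_iff, PowerSeries.ext_iff,
    Prod.ext_iff, coeff_mul_fst, coeff_mul_snd, coeff_actionSeries, forall_and]
  aesop

theorem isFormalIso_iff {ξ ξ' : ℕ → A →ₗ[k] Module.End k M}
    {η η' : ℕ → A →ₗ[k] Module.End k N} {Φ Φ' : ℕ → M →ₗ[k] N}
    {W : PowerSeries (Module.End k M × Module.End k N)} :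
    IsFormalIso ξ η Φ ξ' η' Φ' (fun l => (coeff l W).1) (fun l => (coeff l W).2) ↔
      constantCoeff W = 1 ∧ (∀ r, SemiconjBy W (actionSeries ξ η r) (actionSeries ξ' η' r)) ∧
        SemiconjBy (blockDiag k M N W) (cornerSeries Φ) (cornerSeries Φ') := by
  simp only [IsFormalIso, SemiconjBy, cornerSeries_mul_blockDiag,
    blockDiag_mul_cornerSeries, cornerSeries_injective.eq_iff, funext_iff, PowerSeries.ext_iff,
    Prod.ext_iff, coeff_mul_fst, coeff_mul_snd, coeff_actionSeries,
    ← coeff_zero_eq_constantCoeff_apply, forall_and, Prod.fst_one, Prod.snd_one]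
  aesop

section Gauge

variable {ξ ξ' ξ'' : ℕ → A →ₗ[k] Module.End k M} {η η' η'' : ℕ → A →ₗ[k] Module.End k N}
  {Φ Φ' Φ'' : ℕ → M →ₗ[k] N}

theorem isFormalIso_one (ξ : ℕ → A →ₗ[k] Module.End k M) (η : ℕ → A →ₗ[k] Module.End k N)
    (Φ : ℕ → M →ₗ[k] N) :
    IsFormalIso ξ η Φ ξ η Φ
      (fun l => (coeff l (1 : PowerSeries (Module.End k M × Module.End k N))).1)
      (fun l => (coeff l (1 : PowerSeries (Module.End k M × Module.End k N))).2) :=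
  isFormalIso_iff.2 ⟨map_one _, fun _ => .one_left _, by rw [map_one]; exact .one_left _⟩

theorem IsFormalIso.trans {W V : PowerSeries (Module.End k M × Module.End k N)}
    (h : IsFormalIso ξ η Φ ξ' η' Φ' (fun l => (coeff l W).1) (fun l => (coeff l W).2))
    (h' : IsFormalIso ξ' η' Φ' ξ'' η'' Φ'' (fun l => (coeff l V).1) (fun l => (coeff l V).2)) :
    IsFormalIso ξ η Φ ξ'' η'' Φ'' (fun l => (coeff l (V * W)).1)
      (fun l => (coeff l (V * W)).2) := by
  obtain ⟨hW, hZ, hF⟩ := isFormalIso_iff.1 h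
  obtain ⟨hV, hZ', hF'⟩ := isFormalIso_iff.1 h'
  exact isFormalIso_iff.2 ⟨by rw [map_mul, hW, hV, one_mul], fun r => (hZ' r).mul_left (hZ r),
    by rw [map_mul]; exact hF'.mul_left hF⟩

theorem exists_isFormalIso (ξ : ℕ → A →ₗ[k] Module.End k M) (η : ℕ → A →ₗ[k] Module.End k N)
    (Φ : ℕ → M →ₗ[k] N) {W : PowerSeries (Module.End k M × Module.End k N)}
    (hW : constantCoeff W = 1) :
    ∃ ξ' η' Φ', IsFormalIso ξ η Φ ξ' η' Φ' (fun l => (coeff l W).1) (fun l => (coeff l W).2) := by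
  obtain ⟨u, rfl⟩ : IsUnit W := isUnit_iff_constantCoeff.2 (hW ▸ isUnit_one)
  obtain ⟨ξ', η', hZ⟩ := exists_actionSeries_eq
    (LinearMap.mulLeft k (u : PowerSeries _) ∘ₗ LinearMap.mulRight k ↑u⁻¹ ∘ₗ actionSeries ξ η)
  obtain ⟨Φ', hF⟩ : ∃ Φ', cornerSeries Φ' =
      blockDiag k M N u * cornerSeries Φ * blockDiag k M N ↑u⁻¹ :=
    ⟨_, by rw [mul_assoc, cornerSeries_mul_blockDiag, blockDiag_mul_cornerSeries]⟩
  refine ⟨ξ', η', Φ', isFormalIso_iff.2 ⟨hW, fun r => ?_, ?_⟩⟩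
  · simpa [hZ, mul_assoc] using u.mk_semiconjBy (actionSeries ξ η r)
  · simpa [hF] using (Units.map (blockDiag k M N).toMonoidHom u).mk_semiconjBy (cornerSeries Φ)

theorem IsFormalIso.isFormalDeformation {ξ0 : A →ₐ[k] Module.End k M}
    {η0 : A →ₐ[k] Module.End k N} {φ : M →ₗ[k] N}
    {W : PowerSeries (Module.End k M × Module.End k N)}
    (hiso : IsFormalIso ξ η Φ ξ' η' Φ' (fun l => (coeff l W).1) (fun l => (coeff l W).2))
    (hdef : IsFormalDeformation ξ0 η0 φ ξ η Φ) : IsFormalDeformation ξ0 η0 φ ξ' η' Φ' := by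
  obtain ⟨hW, hZ, hF⟩ := isFormalIso_iff.1 hiso
  obtain ⟨hξ0, hη0, hΦ0, hmul, hcomm⟩ := isFormalDeformation_iff.1 hdef
  have hu : IsUnit W := isUnit_iff_constantCoeff.2 (hW ▸ isUnit_one)
  have hZ0 (r : A) : (ξ' 0 r, η' 0 r) = (ξ 0 r, η 0 r) := by
    simpa [hW] using ((hZ r).map constantCoeff).eq.symm
  have hV : constantCoeff (blockDiag k M N W) = 1 := by
    rw [← coeff_zero_eq_constantCoeff_apply, coeff_map, coeff_zero_eq_constantCoeff_apply, hW,
      map_one]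
  have hF0 : corner (Φ' 0) = corner (Φ 0) := by
    simpa [hV] using (hF.map constantCoeff).eq.symm
  refine isFormalDeformation_iff.2 ⟨?_, ?_, ?_, fun r s => ?_, fun r => ?_⟩
  · ext1 r; simpa [hξ0] using congr(($(hZ0 r)).1)
  · ext1 r; simpa [hη0] using congr(($(hZ0 r)).2)
  · rw [corner_injective hF0, hΦ0]
  -- `W` is a unit, so it semiconjugates each series to at most one series.
  · refine hu.mul_right_cancel ?_
    rw [← (hZ (r * s)).eq, hmul, ((hZ r).mul_right (hZ s)).eq]
  · have hZr := (hZ r).map (blockDiag k M N)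
    refine (hu.map (blockDiag k M N)).mul_right_cancel ?_
    rw [← (hF.mul_right hZr).eq, (hcomm r).eq, (hZr.mul_right hF).eq]

end Gauge

def VanishesBelow (ξ : ℕ → A →ₗ[k] Module.End k M) (η : ℕ → A →ₗ[k] Module.End k N)
    (Φ : ℕ → M →ₗ[k] N) (n : ℕ) : Prop :=
  ∀ i, 1 ≤ i → i < n → ξ i = 0 ∧ η i = 0 ∧ Φ i = 0

def IsCoboundary (ξ0 : A →ₐ[k] Module.End k M) (η0 : A →ₐ[k] Module.End k N) (φ : M →ₗ[k] N)
    (u : A →ₗ[k] Module.End k M) (v : A →ₗ[k] Module.End k N) (w : M →ₗ[k] N) : Prop :=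
  ∃ (p : Module.End k M) (q : Module.End k N), (∀ a, u a = ξ0 a * p - p * ξ0 a) ∧
    (∀ a, v a = η0 a * q - q * η0 a) ∧ w = φ ∘ₗ p - q ∘ₗ φ

def TrivializesBelow (ξ0 : A →ₐ[k] Module.End k M) (η0 : A →ₐ[k] Module.End k N)
    (φ : M →ₗ[k] N) (ξ : ℕ → A →ₗ[k] Module.End k M) (η : ℕ → A →ₗ[k] Module.End k N)
    (Φ : ℕ → M →ₗ[k] N) (W : PowerSeries (Module.End k M × Module.End k N)) (n : ℕ) : Prop :=
  ∃ ξ' η' Φ', IsFormalDeformation ξ0 η0 φ ξ' η' Φ' ∧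
    IsFormalIso ξ η Φ ξ' η' Φ' (fun l => (coeff l W).1) (fun l => (coeff l W).2) ∧
    VanishesBelow ξ' η' Φ' n

section Trivialization

variable {ξ0 : A →ₐ[k] Module.End k M} {η0 : A →ₐ[k] Module.End k N} {φ : M →ₗ[k] N}
  {ξ ξ' : ℕ → A →ₗ[k] Module.End k M} {η η' : ℕ → A →ₗ[k] Module.End k N}
  {Φ Φ' : ℕ → M →ₗ[k] N} {n : ℕ}

theorem VanishesBelow.eq_trivialCoeffs (hvan : VanishesBelow ξ η Φ n)
    (hdef : IsFormalDeformation ξ0 η0 φ ξ η Φ) {i : ℕ} (hi : i < n) :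
    ξ i = trivialCoeffs ξ0.toLinearMap i ∧ η i = trivialCoeffs η0.toLinearMap i ∧
      Φ i = trivialCoeffs φ i := by
  rcases Nat.eq_zero_or_pos i with rfl | hi0
  · simpa [trivialCoeffs] using ⟨hdef.1, hdef.2.1, hdef.2.2.1⟩
  · simpa [trivialCoeffs, hi0.ne'] using hvan i hi0 hi

theorem VanishesBelow.succ_of_isFormalIso (hvan : VanishesBelow ξ η Φ n)
    (hdef : IsFormalDeformation ξ0 η0 φ ξ η Φ) (hn : 1 ≤ n) {p : Module.End k M}
    {q : Module.End k N} (hp : ∀ a, ξ n a = ξ0 a * p - p * ξ0 a)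
    (hq : ∀ a, η n a = η0 a * q - q * η0 a) (hw : Φ n = φ ∘ₗ p - q ∘ₗ φ)
    (hiso : IsFormalIso ξ η Φ ξ' η' Φ' (fun l => (coeff l (1 + C (p, q) * X ^ n)).1)
      (fun l => (coeff l (1 + C (p, q) * X ^ n)).2)) :
    VanishesBelow ξ' η' Φ' (n + 1) := by
  obtain ⟨-, hZ, hF⟩ := isFormalIso_iff.1 hiso
  obtain ⟨hξ0, hη0, hΦ0, -⟩ := hdef
  have hZ' (r : A) (i : ℕ) (hi : 1 ≤ i) (hin : i ≤ n) : coeff i (actionSeries ξ' η' r) = 0 := by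
    obtain ⟨hlow, htop⟩ := coeff_of_semiconjBy_one_add_C_mul_X_pow hn (hZ r)
    rcases hin.lt_or_eq with hin | rfl
    · obtain ⟨hξi, hηi, -⟩ := hvan i hi hin
      simp [hlow i hin, hξi, hηi]
    -- in degree `n` the gauge adds `[(p, q), Z₀] = -d(p, q)`, cancelling the coboundary
    · ext <;> simp [htop, hp, hq, hξ0, hη0]
  have hF' (i : ℕ) (hi : 1 ≤ i) (hin : i ≤ n) : Φ' i = 0 := by
    simp only [map_add, map_one, map_mul, map_C, map_pow, map_X] at hF
    obtain ⟨hlow, htop⟩ := coeff_of_semiconjBy_one_add_C_mul_X_pow hn hF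
    refine corner_injective ?_
    rw [map_zero, ← coeff_cornerSeries]
    rcases hin.lt_or_eq with hin | rfl
    · simp [hlow i hin, (hvan i hi hin).2.2]
    · simp [htop, hw, hΦ0, prodMap_mul_corner, corner_mul_prodMap]
  intro i hi hin
  have hin' : i ≤ n := by omega
  exact ⟨LinearMap.ext fun r => by simpa using congr(($(hZ' r i hi hin')).1),
    LinearMap.ext fun r => by simpa using congr(($(hZ' r i hi hin')).2), hF' i hi hin'⟩

theorem exists_trivializesBelow_succ {W : PowerSeries (Module.End k M × Module.End k N)}
    (hdef' : IsFormalDeformation ξ0 η0 φ ξ' η' Φ')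
    (hiso : IsFormalIso ξ η Φ ξ' η' Φ' (fun l => (coeff l W).1) (fun l => (coeff l W).2))
    (hvan : VanishesBelow ξ' η' Φ' n) (hn : 1 ≤ n)
    (hcob : IsCoboundary ξ0 η0 φ (ξ' n) (η' n) (Φ' n)) :
    ∃ W', TrivializesBelow ξ0 η0 φ ξ η Φ W' (n + 1) ∧ ∀ i < n, coeff i W' = coeff i W := by
  obtain ⟨p, q, hp, hq, hw⟩ := hcob
  have hG : constantCoeff (1 + C (p, q) * X ^ n) = 1 := by
    simp [zero_pow (Nat.one_le_iff_ne_zero.1 hn)]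
  obtain ⟨ξ'', η'', Φ'', hiso'⟩ := exists_isFormalIso ξ' η' Φ' hG
  refine ⟨_, ⟨ξ'', η'', Φ'', hiso'.isFormalDeformation hdef', hiso.trans hiso',
    hvan.succ_of_isFormalIso hdef' hn hp hq hw hiso'⟩, fun i hi => ?_⟩
  simp [coeff_one_add_C_mul_X_pow_mul, not_le.2 hi]

theorem isFormalIso_trivial_of_seq {W : ℕ → PowerSeries (Module.End k M × Module.End k N)}
    (hW : ∀ n, TrivializesBelow ξ0 η0 φ ξ η Φ (W n) (n + 1))
    (hWsucc : ∀ n, ∀ i < n + 1, coeff i (W (n + 1)) = coeff i (W n)) :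
    IsFormalIso ξ η Φ (trivialCoeffs ξ0.toLinearMap) (trivialCoeffs η0.toLinearMap)
      (trivialCoeffs φ) (fun l => (coeff l (mk fun l => coeff l (W l))).1)
      (fun l => (coeff l (mk fun l => coeff l (W l))).2) := by
  set Wlim := mk fun l => coeff l (W l)
  have hlim {l : ℕ} (i : ℕ) (hi : i ≤ l) : coeff i Wlim = coeff i (W l) := by
    rw [coeff_mk]
    exact (eq_diag_of_forall_succ_eq (f := fun n i => coeff i (W n)) hWsucc hi).symm
  refine isFormalIso_iff.2 ⟨?_, fun r => PowerSeries.ext fun l => ?_, PowerSeries.ext fun l => ?_⟩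
  · obtain ⟨_, _, _, -, hiso, -⟩ := hW 0
    rw [← coeff_zero_eq_constantCoeff_apply, coeff_mk, coeff_zero_eq_constantCoeff_apply]
    exact (isFormalIso_iff.1 hiso).1
  · obtain ⟨ξl, ηl, Φl, hdefl, hisol, hvanl⟩ := hW l
    refine coeff_semiconjBy_congr ((isFormalIso_iff.1 hisol).2.1 r) hlim (fun _ _ => rfl)
      fun i hi => ?_
    obtain ⟨hξ, hη, -⟩ := hvanl.eq_trivialCoeffs hdefl (Nat.lt_succ_of_le hi)
    simp [hξ, hη]
  · obtain ⟨ξl, ηl, Φl, hdefl, hisol, hvanl⟩ := hW l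
    refine coeff_semiconjBy_congr (isFormalIso_iff.1 hisol).2.2 (fun i hi => ?_)
      (fun _ _ => rfl) fun i hi => ?_
    · simp [coeff_map, hlim i hi]
    · simp [(hvanl.eq_trivialCoeffs hdefl (Nat.lt_succ_of_le hi)).2.2]

theorem exists_isFormalIso_trivial (hdef : IsFormalDeformation ξ0 η0 φ ξ η Φ)
    (hstep : ∀ n W, TrivializesBelow ξ0 η0 φ ξ η Φ W (n + 1) →
      ∃ W', TrivializesBelow ξ0 η0 φ ξ η Φ W' (n + 2) ∧ ∀ i < n + 1, coeff i W' = coeff i W) :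
    ∃ ψ θ, IsFormalIso ξ η Φ (trivialCoeffs ξ0.toLinearMap) (trivialCoeffs η0.toLinearMap)
      (trivialCoeffs φ) ψ θ := by
  have h0 : TrivializesBelow ξ0 η0 φ ξ η Φ 1 1 :=
    ⟨ξ, η, Φ, hdef, isFormalIso_one ξ η Φ, fun i hi hi' => absurd hi' (by omega)⟩
  obtain ⟨W, hW, hWsucc⟩ := exists_seq_of_forall_exists_succ h0 hstep
  exact ⟨_, _, isFormalIso_trivial_of_seq hW hWsucc⟩

end Trivialization

/-- A non-trivial formal deformation of a module homomorphism `φ` is equivalent to a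
deformation whose `n`-infinitesimal is not a coboundary, for some `n ≥ 1`. -/
theorem nontrivial_equivalent_nInfinitesimal_not_coboundary (ξ0 : A →ₐ[k] Module.End k M)
    (η0 : A →ₐ[k] Module.End k N) (φ : M →ₗ[k] N)
    (ξ : ℕ → (A →ₗ[k] Module.End k M)) (η : ℕ → (A →ₗ[k] Module.End k N))
    (Φ : ℕ → (M →ₗ[k] N)) (hdef : IsFormalDeformation ξ0 η0 φ ξ η Φ)
    (hnontrivial : ¬∃ (ψ : ℕ → Module.End k M) (θ : ℕ → Module.End k N),
      IsFormalIso ξ η Φ (trivialCoeffs ξ0.toLinearMap) (trivialCoeffs η0.toLinearMap)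
        (trivialCoeffs φ) ψ θ) :
    ∃ (n : ℕ) (ξ' : ℕ → (A →ₗ[k] Module.End k M)) (η' : ℕ → (A →ₗ[k] Module.End k N))
        (Φ' : ℕ → (M →ₗ[k] N)) (ψ : ℕ → Module.End k M) (θ : ℕ → Module.End k N),
      1 ≤ n ∧ IsFormalDeformation ξ0 η0 φ ξ' η' Φ' ∧
      IsFormalIso ξ η Φ ξ' η' Φ' ψ θ ∧
      (∀ i, 1 ≤ i → i < n → ξ' i = 0 ∧ η' i = 0 ∧ Φ' i = 0) ∧
      ¬∃ (p : Module.End k M) (q : Module.End k N),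
        (∀ a : A, ξ' n a = ξ0 a * p - p * ξ0 a) ∧
        (∀ a : A, η' n a = η0 a * q - q * η0 a) ∧
        (Φ' n = φ ∘ₗ (p : M →ₗ[k] M) - (q : N →ₗ[k] N) ∘ₗ φ) := by
  by_contra hcon
  push Not at hcon
  refine hnontrivial (exists_isFormalIso_trivial hdef fun n W ⟨ξ', η', Φ', hdef', hiso, hvan⟩ => ?_)
  exact exists_trivializesBelow_succ hdef' hiso hvan n.succ_pos
    (hcon (n + 1) ξ' η' Φ' _ _ n.succ_pos hdef' hiso hvan)
end

section
/- If H^1(A; End(M)) = 0, H^1(A; End(N)) = 0, and H^0(A; Hom_k(M,N)) = 0, then the module homomorphism φ: M → N is rigid. -/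
open Finset

variable {k A M N : Type*} [CommRing k] [Ring A] [Algebra k A]
  [AddCommGroup M] [Module k M] [AddCommGroup N] [Module k N]

/-!
Power series in `t` whose coefficients are linear maps are multiplied by the Cauchy product `⋆`
of composition. A gauge `Ψ_t` with `ξ₀(r) Ψ_t = Ψ_t ξ_t(r)` is built order by order: if the
equation holds below order `l` and `ψ_l = 0`, multiplicativity of `ξ_t` makes the order-`l`
defect `r ↦ (Ψ_t ξ_t(r))_l` a Hochschild 1-cocycle, so `H¹(A; End M) = 0` writes it as a
coboundary `δp`, and `ψ_l := p` solves order `l`. The same gives `Θ_t` for `η_t`. Then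
`D_t := φ Ψ_t - Θ_t φ_t` satisfies `η₀(r) D_t = D_t ξ_t(r)`, so the lowest nonzero coefficient of
`D_t` would be an `A`-linear map `M → N`; by `H⁰(A; Hom_k(M, N)) = 0` there is none, and
`φ Ψ_t = Θ_t φ_t`.
-/

section CauchyComp

variable {P Q : Type*} [AddCommGroup P] [Module k P] [AddCommGroup Q] [Module k Q]

def cauchyComp (f : ℕ → N →ₗ[k] P) (g : ℕ → M →ₗ[k] N) (n : ℕ) : M →ₗ[k] P :=
  ∑ ij ∈ antidiagonal n, f ij.1 ∘ₗ g ij.2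

infixl:70 " ⋆ " => cauchyComp

theorem cauchyComp_assoc (f : ℕ → P →ₗ[k] Q) (g : ℕ → N →ₗ[k] P) (h : ℕ → M →ₗ[k] N) :
    f ⋆ g ⋆ h = f ⋆ (g ⋆ h) := by
  ext n x
  simp only [cauchyComp, LinearMap.comp_apply, LinearMap.sum_apply, map_sum, Finset.sum_sigma']
  apply Finset.sum_nbij' (fun ⟨⟨_i, j⟩, ⟨k, l⟩⟩ ↦ ⟨(k, l + j), (l, j)⟩)
    (fun ⟨⟨i, _j⟩, ⟨k, l⟩⟩ ↦ ⟨(i + k, l), (i, k)⟩) <;>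
    aesop (add simp [add_assoc])

theorem sub_cauchyComp (f f' : ℕ → N →ₗ[k] P) (g : ℕ → M →ₗ[k] N) :
    (f - f') ⋆ g = f ⋆ g - f' ⋆ g := by
  ext1 n
  simp only [cauchyComp, Pi.sub_apply, LinearMap.sub_comp, Finset.sum_sub_distrib]

theorem cauchyComp_sub (f : ℕ → N →ₗ[k] P) (g g' : ℕ → M →ₗ[k] N) :
    f ⋆ (g - g') = f ⋆ g - f ⋆ g' := by
  ext1 n
  simp only [cauchyComp, Pi.sub_apply, LinearMap.comp_sub, Finset.sum_sub_distrib]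

theorem add_cauchyComp (f f' : ℕ → N →ₗ[k] P) (g : ℕ → M →ₗ[k] N) :
    (f + f') ⋆ g = f ⋆ g + f' ⋆ g := by
  ext1 n
  simp only [cauchyComp, Pi.add_apply, LinearMap.add_comp, Finset.sum_add_distrib]

theorem cauchyComp_apply_zero (f : ℕ → N →ₗ[k] P) (g : ℕ → M →ₗ[k] N) :
    (f ⋆ g) 0 = f 0 ∘ₗ g 0 := by
  simp [cauchyComp]

theorem cauchyComp_apply_congr_left {f f' : ℕ → N →ₗ[k] P} (g : ℕ → M →ₗ[k] N) {n : ℕ}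
    (h : ∀ i ≤ n, f i = f' i) : (f ⋆ g) n = (f' ⋆ g) n :=
  Finset.sum_congr rfl fun ij hij => by
    rw [h ij.1 (HasAntidiagonal.antidiagonal.fst_le hij)]

theorem cauchyComp_apply_of_forall_lt_eq_zero {f : ℕ → N →ₗ[k] P} (g : ℕ → M →ₗ[k] N) {n : ℕ}
    (h : ∀ i < n, f i = 0) : (f ⋆ g) n = f n ∘ₗ g 0 := by
  refine Finset.sum_eq_single_of_mem (n, 0) (by simp) fun ij hij hne => ?_
  have hlt : ij.1 < n := by
    rw [HasAntidiagonal.mem_antidiagonal] at hij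
    by_contra!
    exact hne (Prod.ext (by omega) (by omega))
  rw [h ij.1 hlt, LinearMap.zero_comp]

theorem single_cauchyComp_apply_add (i : ℕ) (x : N →ₗ[k] P) (g : ℕ → M →ₗ[k] N) (n : ℕ) :
    (Pi.single i x ⋆ g) (i + n) = x ∘ₗ g n := by
  refine (Finset.sum_eq_single_of_mem (i, n) (by simp) fun ij hij hne => ?_).trans (by simp)
  have hi : ij.1 ≠ i := by
    rw [HasAntidiagonal.mem_antidiagonal] at hij
    exact fun h => hne (Prod.ext h (by omega))
  rw [Pi.single_eq_of_ne hi, LinearMap.zero_comp]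

theorem single_cauchyComp_apply_self (i : ℕ) (x : N →ₗ[k] P) (g : ℕ → M →ₗ[k] N) :
    (Pi.single i x ⋆ g) i = x ∘ₗ g 0 :=
  single_cauchyComp_apply_add i x g 0

theorem trivialCoeffs_eq_single (x : N →ₗ[k] P) : trivialCoeffs x = Pi.single 0 x := by
  ext1 n
  simp [trivialCoeffs, Pi.single_apply]

theorem trivialCoeffs_cauchyComp_apply (x : N →ₗ[k] P) (g : ℕ → M →ₗ[k] N) (n : ℕ) :
    (trivialCoeffs x ⋆ g) n = x ∘ₗ g n := by
  simpa [trivialCoeffs_eq_single] using single_cauchyComp_apply_add 0 x g n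

theorem trivialCoeffs_comp (x : N →ₗ[k] P) (y : M →ₗ[k] N) :
    trivialCoeffs (x ∘ₗ y) = trivialCoeffs x ⋆ trivialCoeffs y := by
  ext1 n
  rw [trivialCoeffs_cauchyComp_apply]
  by_cases hn : n = 0 <;> simp [trivialCoeffs, hn]

end CauchyComp

theorem trivialCoeffs_apply_apply {X : Type*} [AddCommGroup X] [Module k X] (F : A →ₗ[k] X)
    (n : ℕ) (r : A) : trivialCoeffs F n r = trivialCoeffs (F r) n := by
  unfold trivialCoeffs
  split_ifs <;> rfl

section Gauge

variable (ρ0 : A →ₐ[k] Module.End k M) (ρ : ℕ → A →ₗ[k] Module.End k M)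

theorem cauchyComp_isCocycle_of_forall_lt (h0 : ρ 0 = ρ0.toLinearMap)
    (hmul : ∀ r s, (ρ · (r * s)) = (ρ · r) ⋆ (ρ · s)) {ψ : ℕ → Module.End k M} {l : ℕ}
    (hψl : ψ l = 0) (hψ : ∀ m < l, ∀ r, ρ0 r ∘ₗ ψ m = (ψ ⋆ (ρ · r)) m) (a b : A) :
    ρ0 a * (ψ ⋆ (ρ · b)) l - (ψ ⋆ (ρ · (a * b))) l + (ψ ⋆ (ρ · a)) l * ρ0 b = 0 := by
  set E : A → ℕ → Module.End k M := fun r => trivialCoeffs (ρ0 r) ⋆ ψ - ψ ⋆ (ρ · r)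
  have hE : E (a * b) = trivialCoeffs (ρ0 a) ⋆ E b + E a ⋆ (ρ · b) := by
    simp only [E, cauchyComp_sub, sub_cauchyComp, hmul, map_mul, Module.End.mul_eq_comp,
      trivialCoeffs_comp, cauchyComp_assoc]
    abel
  have hlow : ∀ m < l, E a m = 0 := fun m hm => by
    simp [E, trivialCoeffs_cauchyComp_apply, hψ m hm a]
  have htop : ∀ r, E r l = -(ψ ⋆ (ρ · r)) l := fun r => by
    simp [E, trivialCoeffs_cauchyComp_apply, hψl]
  have hρb : ρ 0 b = ρ0 b := by rw [h0]; rfl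
  have hl := congrFun hE l
  rw [Pi.add_apply, trivialCoeffs_cauchyComp_apply,
    cauchyComp_apply_of_forall_lt_eq_zero _ hlow] at hl
  simp only [htop, hρb, LinearMap.comp_neg, LinearMap.neg_comp, ← neg_add, neg_inj] at hl
  rw [hl, Module.End.mul_eq_comp, Module.End.mul_eq_comp]
  abel

theorem exists_cauchyComp_eq_of_forall_lt (h0 : ρ 0 = ρ0.toLinearMap)
    (hmul : ∀ r s, (ρ · (r * s)) = (ρ · r) ⋆ (ρ · s))
    (hH1 : ∀ u : A →ₗ[k] Module.End k M,
      (∀ a b : A, ρ0 a * u b - u (a * b) + u a * ρ0 b = 0) →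
      ∃ p : Module.End k M, ∀ a : A, u a = ρ0 a * p - p * ρ0 a)
    {ψ : ℕ → Module.End k M} {l : ℕ}
    (hψl : ψ l = 0) (hψ : ∀ m < l, ∀ r, ρ0 r ∘ₗ ψ m = (ψ ⋆ (ρ · r)) m) :
    ∃ p : Module.End k M, ∀ r, (ψ ⋆ (ρ · r)) l = ρ0 r * p - p * ρ0 r := by
  let u : A →ₗ[k] Module.End k M :=
    ∑ ij ∈ antidiagonal l, LinearMap.mulLeft k (ψ ij.1) ∘ₗ ρ ij.2
  have hu : ∀ r, u r = (ψ ⋆ (ρ · r)) l := fun r => by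
    simp only [u, cauchyComp, LinearMap.sum_apply, LinearMap.comp_apply, LinearMap.mulLeft_apply,
      Module.End.mul_eq_comp]
  simpa only [hu] using hH1 u fun a b => by
    simpa only [hu] using cauchyComp_isCocycle_of_forall_lt ρ0 ρ h0 hmul hψl hψ a b

-- `Ψ_t` modulo `t^{l+1}`; `Classical.epsilon` picks a solution `p` of the order-`(l+1)`
-- equation, which exists by `truncGauge_spec`.
noncomputable def truncGauge : ℕ → ℕ → Module.End k M
  | 0 => Pi.single 0 1
  | l + 1 => truncGauge l + Pi.single (l + 1) (Classical.epsilon fun p : Module.End k M =>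
      ∀ r, (truncGauge l ⋆ (ρ · r)) (l + 1) = ρ0 r * p - p * ρ0 r)

theorem truncGauge_succ_apply_of_le {l i : ℕ} (h : i ≤ l) :
    truncGauge ρ0 ρ (l + 1) i = truncGauge ρ0 ρ l i := by
  rw [truncGauge, Pi.add_apply, Pi.single_eq_of_ne (by omega), add_zero]

theorem truncGauge_apply_of_lt {l i : ℕ} (h : l < i) : truncGauge ρ0 ρ l i = 0 := by
  induction l with
  | zero => exact Pi.single_eq_of_ne (by omega) _
  | succ l ih =>
    rw [truncGauge, Pi.add_apply, ih (by omega), Pi.single_eq_of_ne (by omega), add_zero]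

theorem truncGauge_apply_of_le {l i : ℕ} (h : i ≤ l) :
    truncGauge ρ0 ρ l i = truncGauge ρ0 ρ i i := by
  induction l with
  | zero =>
    obtain rfl : i = 0 := by omega
    rfl
  | succ l ih =>
    rcases h.eq_or_lt with rfl | h
    · rfl
    · rw [truncGauge_succ_apply_of_le ρ0 ρ (by omega), ih (by omega)]

variable {ρ0 ρ}

theorem truncGauge_spec (h0 : ρ 0 = ρ0.toLinearMap)
    (hmul : ∀ r s, (ρ · (r * s)) = (ρ · r) ⋆ (ρ · s))
    (hH1 : ∀ u : A →ₗ[k] Module.End k M,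
      (∀ a b : A, ρ0 a * u b - u (a * b) + u a * ρ0 b = 0) →
      ∃ p : Module.End k M, ∀ a : A, u a = ρ0 a * p - p * ρ0 a)
    (l : ℕ) : ∀ m ≤ l, ∀ r, ρ0 r ∘ₗ truncGauge ρ0 ρ l m = (truncGauge ρ0 ρ l ⋆ (ρ · r)) m := by
  induction l with
  | zero =>
    intro m hm r
    obtain rfl : m = 0 := by omega
    rw [truncGauge, single_cauchyComp_apply_self, h0]
    rfl
  | succ l ih =>
    intro m hm r
    rcases hm.lt_or_eq with hm | rfl
    · rw [truncGauge_succ_apply_of_le ρ0 ρ (by omega),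
        cauchyComp_apply_congr_left _ fun i hi => truncGauge_succ_apply_of_le ρ0 ρ (by omega)]
      exact ih m (by omega) r
    · have hp := Classical.epsilon_spec (exists_cauchyComp_eq_of_forall_lt ρ0 ρ h0 hmul hH1
        (truncGauge_apply_of_lt ρ0 ρ (Nat.lt_succ_self l)) fun m hm => ih m (Nat.le_of_lt_succ hm))
      rw [truncGauge, add_cauchyComp, Pi.add_apply, Pi.add_apply, single_cauchyComp_apply_self,
        truncGauge_apply_of_lt ρ0 ρ (Nat.lt_succ_self l), hp r, h0, Pi.single_eq_same, zero_add]
      simp only [Module.End.mul_eq_comp, AlgHom.toLinearMap_apply]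
      abel

theorem exists_gauge (h0 : ρ 0 = ρ0.toLinearMap)
    (hmul : ∀ r s, (ρ · (r * s)) = (ρ · r) ⋆ (ρ · s))
    (hH1 : ∀ u : A →ₗ[k] Module.End k M,
      (∀ a b : A, ρ0 a * u b - u (a * b) + u a * ρ0 b = 0) →
      ∃ p : Module.End k M, ∀ a : A, u a = ρ0 a * p - p * ρ0 a) :
    ∃ ψ : ℕ → Module.End k M, ψ 0 = 1 ∧ ∀ r, trivialCoeffs (ρ0 r) ⋆ ψ = ψ ⋆ (ρ · r) := by
  refine ⟨fun l => truncGauge ρ0 ρ l l, Pi.single_eq_same _ _, fun r => funext fun m => ?_⟩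
  rw [trivialCoeffs_cauchyComp_apply, truncGauge_spec h0 hmul hH1 m m le_rfl r]
  exact cauchyComp_apply_congr_left _ fun i hi => truncGauge_apply_of_le ρ0 ρ hi

end Gauge

theorem eq_zero_of_trivialCoeffs_cauchyComp_eq (ξ0 : A →ₐ[k] Module.End k M)
    (η0 : A →ₐ[k] Module.End k N) {ξ : ℕ → A →ₗ[k] Module.End k M}
    (h0 : ξ 0 = ξ0.toLinearMap)
    (hH0 : ∀ w : M →ₗ[k] N,
      (∀ a : A, (η0 a : N →ₗ[k] N) ∘ₗ w - w ∘ₗ (ξ0 a : M →ₗ[k] M) = 0) → w = 0)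
    {D : ℕ → M →ₗ[k] N} (hD : ∀ a, trivialCoeffs (η0 a) ⋆ D = D ⋆ (ξ · a)) : D = 0 := by
  funext l
  induction l using Nat.strong_induction_on with
  | _ l ih =>
    refine hH0 _ fun a => ?_
    have hl := congrFun (hD a) l
    rw [trivialCoeffs_cauchyComp_apply, cauchyComp_apply_of_forall_lt_eq_zero _ ih, h0] at hl
    exact sub_eq_zero.mpr hl

theorem trivialCoeffs_cauchyComp_sub_cauchyComp_intertwines {ξ0 : A →ₐ[k] Module.End k M}
    {η0 : A →ₐ[k] Module.End k N} {ξ : ℕ → A →ₗ[k] Module.End k M}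
    {η : ℕ → A →ₗ[k] Module.End k N} {φ : M →ₗ[k] N} {Φ : ℕ → M →ₗ[k] N}
    {ψ : ℕ → Module.End k M} {θ : ℕ → Module.End k N}
    (hφ : ∀ a, (η0 a : N →ₗ[k] N) ∘ₗ φ = φ ∘ₗ (ξ0 a : M →ₗ[k] M))
    (hΦ : ∀ a, Φ ⋆ (ξ · a) = (η · a) ⋆ Φ)
    (hψ : ∀ a, trivialCoeffs (ξ0 a) ⋆ ψ = ψ ⋆ (ξ · a))
    (hθ : ∀ a, trivialCoeffs (η0 a) ⋆ θ = θ ⋆ (η · a)) (a : A) :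
    trivialCoeffs (η0 a) ⋆ (trivialCoeffs φ ⋆ ψ - θ ⋆ Φ) =
      (trivialCoeffs φ ⋆ ψ - θ ⋆ Φ) ⋆ (ξ · a) := by
  have hφψ : trivialCoeffs (η0 a) ⋆ (trivialCoeffs φ ⋆ ψ) = trivialCoeffs φ ⋆ ψ ⋆ (ξ · a) :=
    calc trivialCoeffs (η0 a) ⋆ (trivialCoeffs φ ⋆ ψ)
        = trivialCoeffs (φ ∘ₗ (ξ0 a : M →ₗ[k] M)) ⋆ ψ := by
          rw [← cauchyComp_assoc, ← trivialCoeffs_comp, hφ]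
      _ = trivialCoeffs φ ⋆ (ψ ⋆ (ξ · a)) := by rw [trivialCoeffs_comp, cauchyComp_assoc, hψ]
      _ = trivialCoeffs φ ⋆ ψ ⋆ (ξ · a) := (cauchyComp_assoc _ _ _).symm
  have hθΦ : trivialCoeffs (η0 a) ⋆ (θ ⋆ Φ) = θ ⋆ Φ ⋆ (ξ · a) :=
    calc trivialCoeffs (η0 a) ⋆ (θ ⋆ Φ) = θ ⋆ ((η · a) ⋆ Φ) := by
          rw [← cauchyComp_assoc, hθ, cauchyComp_assoc]
      _ = θ ⋆ Φ ⋆ (ξ · a) := by rw [← hΦ, cauchyComp_assoc]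
  rw [cauchyComp_sub, sub_cauchyComp, hφψ, hθΦ]

/-- If `H¹(A; End M) = 0`, `H¹(A; End N) = 0` and `H⁰(A; Hom_k(M,N)) = 0`, then the
module homomorphism `φ : M → N` is rigid: every formal one-parameter deformation of `φ`
is equivalent to the trivial deformation `(ξ₀, η₀, φ)`. -/
theorem rigid_of_hochschild_vanishing (ξ0 : A →ₐ[k] Module.End k M)
    (η0 : A →ₐ[k] Module.End k N) (φ : M →ₗ[k] N)
    (hM : ∀ u : A →ₗ[k] Module.End k M,
      (∀ a b : A, ξ0 a * u b - u (a * b) + u a * ξ0 b = 0) →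
      ∃ p : Module.End k M, ∀ a : A, u a = ξ0 a * p - p * ξ0 a)
    (hN : ∀ v : A →ₗ[k] Module.End k N,
      (∀ a b : A, η0 a * v b - v (a * b) + v a * η0 b = 0) →
      ∃ q : Module.End k N, ∀ a : A, v a = η0 a * q - q * η0 a)
    (hMN : ∀ w : M →ₗ[k] N,
      (∀ a : A, (η0 a : N →ₗ[k] N) ∘ₗ w - w ∘ₗ (ξ0 a : M →ₗ[k] M) = 0) → w = 0) :
    ∀ (ξ : ℕ → (A →ₗ[k] Module.End k M)) (η : ℕ → (A →ₗ[k] Module.End k N))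
        (Φ : ℕ → (M →ₗ[k] N)), IsFormalDeformation ξ0 η0 φ ξ η Φ →
      ∃ (ψ : ℕ → Module.End k M) (θ : ℕ → Module.End k N),
        IsFormalIso ξ η Φ (trivialCoeffs ξ0.toLinearMap) (trivialCoeffs η0.toLinearMap)
          (trivialCoeffs φ) ψ θ := by
  intro ξ η Φ ⟨hξ0, hη0, hΦ0, hξ, hη, hΦ⟩
  obtain ⟨ψ, hψ0, hψ⟩ := exists_gauge hξ0 (fun r s => funext fun l => hξ l r s) hM
  obtain ⟨θ, hθ0, hθ⟩ := exists_gauge hη0 (fun r s => funext fun l => hη l r s) hN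
  have hΦ' : ∀ a, Φ ⋆ (ξ · a) = (η · a) ⋆ Φ := fun a => funext fun l => hΦ l a
  have hφ : ∀ a, (η0 a : N →ₗ[k] N) ∘ₗ φ = φ ∘ₗ (ξ0 a : M →ₗ[k] M) := fun a => by
    simpa [cauchyComp_apply_zero, hξ0, hη0, hΦ0] using (congrFun (hΦ' a) 0).symm
  have hφψ : trivialCoeffs φ ⋆ ψ = θ ⋆ Φ := sub_eq_zero.mp <|
    eq_zero_of_trivialCoeffs_cauchyComp_eq ξ0 η0 hξ0 hMN
      (trivialCoeffs_cauchyComp_sub_cauchyComp_intertwines hφ hΦ' hψ hθ)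
  refine ⟨ψ, θ, hψ0, hθ0, fun l r => ?_, fun l r => ?_, fun l => congrFun hφψ l⟩
  · simp only [trivialCoeffs_apply_apply, AlgHom.toLinearMap_apply]
    exact congrFun (hψ r) l
  · simp only [trivialCoeffs_apply_apply, AlgHom.toLinearMap_apply]
    exact congrFun (hθ r) l
end
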